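/- Axiom (R2) (associativity of addition) is independent of the remaining Tarski axioms: there is a three-element algebra with carrier {0, 1', 1} in which addition is given by 0+x=x+0=x, 1'+1'=1', 1+1=1, 1'+1=1+1'=0; relative multiplication by 0;x=x;0=0, 1';x=x;1'=x for x∈{1',1}, 1;1=1'; complement by -0=0, -1'=1, -1=1'; converse is the identity; and the constant is 1'. In this algebra (R1), (R3)-(R10) all hold, but (R2) fails (e.g. 1'+(1'+1)=1' while (1'+1')+1=0). -/

import Mathlib

/-- The three-element carrier {0, 1', 1} of the independence model for (R2). -/
inductive A2 where
  | zero  -- 0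
  | id'   -- 1'
  | one   -- 1
deriving DecidableEq

/-- Addition: 0+x=x+0=x, 1'+1'=1', 1+1=1, 1'+1=1+1'=0. -/
def addA2 : A2 → A2 → A2
  | .zero, x => x
  | x, .zero => x
  | .id', .id' => .id'
  | .one, .one => .one
  | _, _ => .zero

/-- Relative multiplication: 0;x=x;0=0, 1';x=x;1'=x, 1;1=1'. -/
def mulA2 : A2 → A2 → A2
  | .zero, _ => .zero
  | _, .zero => .zero
  | .id', x => x
  | x, .id' => x
  | .one, .one => .id'

/-- Complement: -0=0, -1'=1, -1=1'. -/
def complA2 : A2 → A2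
  | .zero => .zero
  | .id' => .one
  | .one => .id'

/-- Converse: the identity function. -/
def convA2 (r : A2) : A2 := r

theorem addA2_comm (r s : A2) : addA2 r s = addA2 s r := by
  cases r <;> cases s <;> rfl

theorem addA2_huntington (r s : A2) :
    addA2 (complA2 (addA2 (complA2 r) s)) (complA2 (addA2 (complA2 r) (complA2 s))) = r := by
  cases r <;> cases s <;> rfl

theorem mulA2_assoc (r s t : A2) : mulA2 r (mulA2 s t) = mulA2 (mulA2 r s) t := by
  cases r <;> cases s <;> cases t <;> rfl

theorem mulA2_id' (r : A2) : mulA2 r A2.id' = r := by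
  cases r <;> rfl

theorem convA2_convA2 (r : A2) : convA2 (convA2 r) = r := rfl

theorem convA2_mulA2 (r s : A2) : convA2 (mulA2 r s) = mulA2 (convA2 s) (convA2 r) := by
  cases r <;> cases s <;> rfl

theorem addA2_mulA2 (r s t : A2) : mulA2 (addA2 r s) t = addA2 (mulA2 r t) (mulA2 s t) := by
  cases r <;> cases s <;> cases t <;> rfl

theorem convA2_addA2 (r s : A2) : convA2 (addA2 r s) = addA2 (convA2 r) (convA2 s) := rfl

theorem addA2_schroeder (r s : A2) :
    addA2 (mulA2 (convA2 r) (complA2 (mulA2 r s))) (complA2 s) = complA2 s := by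
  cases r <;> cases s <;> rfl

theorem addA2_not_assoc : ¬ ∀ r s t, addA2 r (addA2 s t) = addA2 (addA2 r s) t :=
  fun h => nomatch h .id' .id' .one

/-- Axiom (R2) is independent of the remaining Tarski axioms: in the
three-element algebra A2 with constant 1', axioms (R1), (R3)-(R10) all hold,
but (R2) fails, e.g. 1'+(1'+1)=1' while (1'+1')+1=0. -/
theorem R2_independent :
    (∀ r s, addA2 r s = addA2 s r) ∧
    (∀ r s, addA2 (complA2 (addA2 (complA2 r) s))
        (complA2 (addA2 (complA2 r) (complA2 s))) = r) ∧
    (∀ r s t, mulA2 r (mulA2 s t) = mulA2 (mulA2 r s) t) ∧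
    (∀ r, mulA2 r A2.id' = r) ∧
    (∀ r, convA2 (convA2 r) = r) ∧
    (∀ r s, convA2 (mulA2 r s) = mulA2 (convA2 s) (convA2 r)) ∧
    (∀ r s t, mulA2 (addA2 r s) t = addA2 (mulA2 r t) (mulA2 s t)) ∧
    (∀ r s, convA2 (addA2 r s) = addA2 (convA2 r) (convA2 s)) ∧
    (∀ r s, addA2 (mulA2 (convA2 r) (complA2 (mulA2 r s))) (complA2 s) = complA2 s) ∧
    ¬ (∀ r s t, addA2 r (addA2 s t) = addA2 (addA2 r s) t) ∧
    addA2 A2.id' (addA2 A2.id' A2.one) = A2.id' ∧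
    addA2 (addA2 A2.id' A2.id') A2.one = A2.zero :=
  ⟨addA2_comm, addA2_huntington, mulA2_assoc, mulA2_id', convA2_convA2, convA2_mulA2,
    addA2_mulA2, convA2_addA2, addA2_schroeder, addA2_not_assoc, rfl, rfl⟩
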